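/- Fix an integer S ≥ 1. Let a : ℕ → ℝ with a_i ≥ 0 and Σ_{i=0}^{∞} a_i = 1, extended by a_k = 0 for k < 0, and let q : ℕ → ℝ with q_i ≥ 0 and Σ_{i=0}^{∞} q_i = 1 satisfy the balance equations q_j = a_j·(Σ_{i=0}^{S} q_i) + Σ_{i=S+1}^{∞} q_i·a_{j−i+S} for all j ∈ ℕ. Define A(z) = Σ_{i=0}^{∞} a_i z^i and N(z) = Σ_{i=0}^{S−1} q_i Σ_{l=i}^{S−1} z^l. Then every z ∈ ℂ with 0 < |z| < 1 and z^S = A(z) satisfies N(z) = 0. -/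

import Mathlib

/-!
The balance equations say that q_j is a_j·C plus the convolution of the tail b_n = q_{n+S+1}
with a, shifted by one, where C = q_0 + ⋯ + q_S. For |z| < 1 all series converge absolutely, so
Q(z) = C·A(z) + z·B(z)·A(z), while splitting off the head P(z) = Σ_{i ≤ S} q_i z^i gives
Q(z) = P(z) + z^{S+1}·B(z). At a root of z^S = A(z) the two expressions force P(z) = C·z^S,
that is Σ_{i < S} q_i (z^S − z^i) = 0, and this sum is (z − 1)·N(z).
-/

/-- Extension of a sequence on ℕ to ℤ by zero on negative integers. -/
def aext (a : ℕ → ℝ) : ℤ → ℝ := fun k => if 0 ≤ k then a k.toNat else 0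

open Finset

lemma aext_natCast (a : ℕ → ℝ) (n : ℕ) : aext a n = a n := by
  simp [aext]

lemma aext_of_neg (a : ℕ → ℝ) {k : ℤ} (hk : k < 0) : aext a k = 0 :=
  if_neg hk.not_ge

lemma tsum_tail_mul_aext_eq_sum_range (a q : ℕ → ℝ) (S j : ℕ) :
    (∑' i : ℕ, if S + 1 ≤ i then q i * aext a ((j : ℤ) - i + S) else 0) =
      ∑ k ∈ range j, q (k + (S + 1)) * a (j - 1 - k) := by
  rw [tsum_eq_sum (s := range (S + 1 + j)), sum_range_add]
  · have hhead : ∑ i ∈ range (S + 1), (if S + 1 ≤ i then q i * aext a ((j : ℤ) - i + S) else 0)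
        = 0 := sum_eq_zero fun i hi => if_neg (by simpa using hi)
    rw [hhead, zero_add]
    refine sum_congr rfl fun k hk => ?_
    have hkj : k < j := mem_range.1 hk
    have hidx : (j : ℤ) - ↑(S + 1 + k) + S = ↑(j - 1 - k) := by omega
    rw [if_pos (Nat.le_add_right _ _), hidx, aext_natCast, add_comm k]
  · intro i hi
    have hidx : (j : ℤ) - i + S < 0 := by simp only [mem_range, not_lt] at hi; omega
    simp [aext_of_neg a hidx]

lemma summable_norm_ofReal_mul_pow {f : ℕ → ℝ} (hf : Summable f) {z : ℂ} (hz : ‖z‖ ≤ 1) :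
    Summable fun n => ‖(f n : ℂ) * z ^ n‖ := by
  refine hf.abs.of_nonneg_of_le (fun _ => norm_nonneg _) fun n => ?_
  rw [norm_mul, norm_pow, Complex.norm_real, Real.norm_eq_abs]
  exact mul_le_of_le_one_right (abs_nonneg _) (pow_le_one₀ (norm_nonneg _) hz)

lemma hasSum_sum_range_mul_pow {R : Type*} [NormedCommRing R] [CompleteSpace R]
    {f g : ℕ → R} {z : R} (hf : Summable fun n => ‖f n * z ^ n‖)
    (hg : Summable fun n => ‖g n * z ^ n‖) :
    HasSum (fun j => (∑ k ∈ range j, f k * g (j - 1 - k)) * z ^ j)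
      (z * ((∑' n, f n * z ^ n) * ∑' n, g n * z ^ n)) := by
  rw [← hasSum_nat_add_iff' 1, sum_range_one, range_zero, sum_empty, zero_mul, sub_zero]
  have hcauchy := (summable_norm_sum_mul_range_of_summable_norm hf hg).of_norm.hasSum
  rw [← tsum_mul_tsum_eq_tsum_sum_range_of_summable_norm hf hg] at hcauchy
  refine (hcauchy.mul_left z).congr_fun fun n => ?_
  rw [Nat.add_sub_cancel, mul_sum, sum_mul, pow_succ']
  refine sum_congr rfl fun k hk => ?_
  rw [← pow_mul_pow_sub z (mem_range_succ_iff.1 hk)]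
  ring

lemma hasSum_mul_pow_of_balance (S : ℕ) {a q : ℕ → ℝ} (ha : Summable a) (hq : Summable q)
    (h_balance : ∀ j : ℕ,
      q j = a j * (∑ i ∈ range (S + 1), q i) +
        ∑' i : ℕ, if S + 1 ≤ i then q i * aext a ((j : ℤ) - (i : ℤ) + (S : ℤ)) else 0)
    {z : ℂ} (hz : ‖z‖ ≤ 1) :
    HasSum (fun j => (q j : ℂ) * z ^ j)
      ((∑ i ∈ range (S + 1), (q i : ℂ)) * ∑' n, (a n : ℂ) * z ^ n +
        z * ((∑' n, (q (n + (S + 1)) : ℂ) * z ^ n) * ∑' n, (a n : ℂ) * z ^ n)) := by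
  have hA := summable_norm_ofReal_mul_pow ha hz
  have hB := summable_norm_ofReal_mul_pow ((summable_nat_add_iff (S + 1)).2 hq) hz
  refine ((hA.of_norm.hasSum.mul_left _).add (hasSum_sum_range_mul_pow hB hA)).congr_fun
    fun j => ?_
  rw [h_balance j, tsum_tail_mul_aext_eq_sum_range]
  push_cast
  ring

lemma sum_mul_sum_Ico_pow_eq_zero {R : Type*} [CommRing R] [IsDomain R] {z : R} (hz : z ≠ 1)
    (q : ℕ → R) (S : ℕ)
    (h : ∑ i ∈ range (S + 1), q i * z ^ i = (∑ i ∈ range (S + 1), q i) * z ^ S) :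
    ∑ i ∈ range S, q i * ∑ l ∈ Ico i S, z ^ l = 0 := by
  refine (mul_eq_zero.1 ?_).resolve_right (sub_ne_zero.2 hz)
  calc (∑ i ∈ range S, q i * ∑ l ∈ Ico i S, z ^ l) * (z - 1)
      = ∑ i ∈ range S, q i * (z ^ S - z ^ i) := by
        rw [sum_mul]
        refine sum_congr rfl fun i hi => ?_
        rw [mul_assoc, geom_sum_Ico_mul z (mem_range.1 hi).le]
    _ = ∑ i ∈ range (S + 1), q i * (z ^ S - z ^ i) := by
        rw [sum_range_succ, sub_self, mul_zero, add_zero]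
    _ = 0 := by
        rw [sum_mul] at h
        simp only [mul_sub, sum_sub_distrib, h, sub_self]

theorem N_vanishes_at_roots_general
    (S : ℕ)
    (a : ℕ → ℝ) (ha_sum : HasSum a 1)
    (q : ℕ → ℝ) (hq_sum : HasSum q 1)
    (h_balance : ∀ j : ℕ,
      q j = a j * (∑ i ∈ Finset.range (S + 1), q i) +
        ∑' i : ℕ, if S + 1 ≤ i then q i * aext a ((j : ℤ) - (i : ℤ) + (S : ℤ)) else 0) :
    ∀ z : ℂ, 0 < ‖z‖ → ‖z‖ < 1 → z ^ S = (∑' i : ℕ, (a i : ℂ) * z ^ i) →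
      ∑ i ∈ Finset.range S, (q i : ℂ) * ∑ l ∈ Finset.Ico i S, z ^ l = 0 := by
  intro z _ hz1 hzA
  have hQ := hasSum_mul_pow_of_balance S ha_sum.summable hq_sum.summable h_balance hz1.le
  have hQ_tail : HasSum (fun j => (q j : ℂ) * z ^ j)
      (∑ i ∈ range (S + 1), (q i : ℂ) * z ^ i +
        z ^ (S + 1) * ∑' n, (q (n + (S + 1)) : ℂ) * z ^ n) := by
    rw [← hasSum_nat_add_iff' (S + 1), add_sub_cancel_left]
    refine ((summable_norm_ofReal_mul_pow ((summable_nat_add_iff (S + 1)).2 hq_sum.summable)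
      hz1.le).of_norm.hasSum.mul_left _).congr_fun fun n => ?_
    ring
  refine sum_mul_sum_Ico_pow_eq_zero (by rintro rfl; simp at hz1) _ S ?_
  rw [← hzA] at hQ
  linear_combination hQ_tail.unique hQ

/-- If q is a stationary distribution of the queue recursion, then every
z with 0 < |z| < 1 and z^S = A(z) satisfies N(z) = 0. -/
theorem N_vanishes_at_roots
    (S : ℕ) (hS : 1 ≤ S)
    (a : ℕ → ℝ) (ha_nonneg : ∀ i, 0 ≤ a i) (ha_sum : HasSum a 1)
    (q : ℕ → ℝ) (hq_nonneg : ∀ i, 0 ≤ q i) (hq_sum : HasSum q 1)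
    (h_balance : ∀ j : ℕ,
      q j = a j * (∑ i ∈ Finset.range (S + 1), q i) +
        ∑' i : ℕ, if S + 1 ≤ i then q i * aext a ((j : ℤ) - (i : ℤ) + (S : ℤ)) else 0) :
    ∀ z : ℂ, 0 < ‖z‖ → ‖z‖ < 1 → z ^ S = (∑' i : ℕ, (a i : ℂ) * z ^ i) →
      ∑ i ∈ Finset.range S, (q i : ℂ) * ∑ l ∈ Finset.Ico i S, z ^ l = 0 :=
  N_vanishes_at_roots_general S a ha_sum q hq_sum h_balance
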